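/- Let V_β > V_δ > 0, let ρ = V_δ/V_β ∈ (0, 1), c > 0, and define F(b) = r(b; c)·(1 − r(b/√(V_β/V_δ − 1); c)) for b ≥ 0, where r(b; c) = Φ(−c−b) + Φ(−c+b). Then as ρ → 0 (i.e., V_β/V_δ → ∞), sup_{b ≥ 0} F(b) → 1 − r(0; c). -/

import Mathlib

/-!
The bound `r b c * (1 - r a c) ≤ 1 - r 0 c` holds for all `a, b ≥ 0`: `r · c ≤ 1`, and `r · c` is
minimal at `0` because the standard normal density is larger on `[-c, -c + a]` than on its
translate `[c, c + a]`. Conversely, taking `b = √w` with `w = √(v - 1)` gives `b → ∞` while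
`b / w = 1 / √w → 0`, so `r b c → 1` and `r (b / w) c → r 0 c`, and the supremum is squeezed.
-/

open MeasureTheory ProbabilityTheory

/-- Standard normal CDF. -/
noncomputable def Phi (x : ℝ) : ℝ := ((gaussianReal 0 1) (Set.Iic x)).toReal

/-- `r(b; c) = Φ(−c − b) + Φ(−c + b)`. -/
noncomputable def r (b c : ℝ) : ℝ := Phi (-c - b) + Phi (-c + b)

open Filter Topology Set

lemma gaussianPDFReal_le_of_sq_le {μ : ℝ} {v : NNReal} {s t : ℝ} (h : (s - μ) ^ 2 ≤ (t - μ) ^ 2) :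
    gaussianPDFReal μ v t ≤ gaussianPDFReal μ v s := by
  simp only [gaussianPDFReal]
  gcongr

lemma Phi_eq_integral (x : ℝ) : Phi x = ∫ t in Iic x, gaussianPDFReal 0 1 t := by
  rw [Phi, gaussianReal_apply_eq_integral 0 one_ne_zero,
    ENNReal.toReal_ofReal (integral_nonneg fun t => gaussianPDFReal_nonneg _ _ _)]

lemma Phi_sub_Phi (a b : ℝ) : Phi b - Phi a = ∫ t in a..b, gaussianPDFReal 0 1 t := by
  rw [Phi_eq_integral, Phi_eq_integral]
  exact intervalIntegral.integral_Iic_sub_Iic (integrable_gaussianPDFReal 0 1).integrableOn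
    (integrable_gaussianPDFReal 0 1).integrableOn

lemma Phi_eq_cdf : Phi = cdf (gaussianReal 0 1) := by
  ext x
  rw [cdf_eq_real]
  rfl

@[fun_prop]
lemma continuous_Phi : Continuous Phi := by
  have h : Phi = fun x => (∫ t in (0 : ℝ)..x, gaussianPDFReal 0 1 t) + Phi 0 := by
    ext x
    rw [← Phi_sub_Phi, sub_add_cancel]
  rw [h]
  exact ((integrable_gaussianPDFReal 0 1).continuous_primitive 0).add continuous_const

lemma Phi_neg (x : ℝ) : Phi (-x) = 1 - Phi x := by
  have h : Phi (-x) = ∫ t in Ioi x, gaussianPDFReal 0 1 t := by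
    rw [Phi_eq_integral, ← neg_neg x, ← integral_comp_neg_Iic, neg_neg]
    simp only [gaussianPDFReal, sub_zero, even_two, Even.neg_pow]
  rw [eq_sub_iff_add_eq, h, Phi_eq_integral, add_comm,
    intervalIntegral.integral_Iic_add_Ioi (integrable_gaussianPDFReal 0 1).integrableOn
      (integrable_gaussianPDFReal 0 1).integrableOn,
    integral_gaussianPDFReal_eq_one 0 one_ne_zero]

lemma Phi_add_sub_Phi_le {c x : ℝ} (hc : 0 ≤ c) (hx : 0 ≤ x) :
    Phi (c + x) - Phi c ≤ Phi (-c + x) - Phi (-c) := by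
  have hshift : ∫ t in c..c + x, gaussianPDFReal 0 1 t
      = ∫ t in -c..-c + x, gaussianPDFReal 0 1 (t + 2 * c) := by
    rw [intervalIntegral.integral_comp_add_right]
    ring_nf
  rw [Phi_sub_Phi, Phi_sub_Phi, hshift]
  refine intervalIntegral.integral_mono_on (by linarith) ?_
    (integrable_gaussianPDFReal 0 1).intervalIntegrable fun t ht => ?_
  · simpa only [gaussianPDFReal_add] using (integrable_gaussianPDFReal _ 1).intervalIntegrable
  · exact gaussianPDFReal_le_of_sq_le (by nlinarith [ht.1])

lemma r_zero_le {c x : ℝ} (hc : 0 ≤ c) (hx : 0 ≤ x) : r 0 c ≤ r x c := by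
  have := Phi_add_sub_Phi_le hc hx
  rw [Phi_neg] at this
  simp only [r, add_zero, sub_eq_add_neg, ← neg_add, Phi_neg]
  linarith

lemma r_le_one {c : ℝ} (hc : 0 ≤ c) (b : ℝ) : r b c ≤ 1 := by
  have : Phi (-c + b) ≤ Phi (c + b) := Phi_eq_cdf ▸ monotone_cdf _ (by linarith)
  simp only [r, sub_eq_add_neg, ← neg_add, Phi_neg]
  linarith

lemma continuous_r (c : ℝ) : Continuous fun b => r b c := by
  unfold r
  fun_prop

lemma tendsto_r_atTop (c : ℝ) : Tendsto (fun b => r b c) atTop (𝓝 1) := by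
  have h₁ : Tendsto (fun b : ℝ => -c - b) atTop atBot :=
    tendsto_atBot_add_const_left _ _ tendsto_neg_atTop_atBot
  have h₂ : Tendsto (fun b : ℝ => -c + b) atTop atTop :=
    tendsto_atTop_add_const_left _ _ tendsto_id
  simpa [r, Phi_eq_cdf] using ((tendsto_cdf_atBot _).comp h₁).add ((tendsto_cdf_atTop _).comp h₂)

lemma r_mul_one_sub_r_le {a c : ℝ} (hc : 0 ≤ c) (ha : 0 ≤ a) (b : ℝ) :
    r b c * (1 - r a c) ≤ 1 - r 0 c := by
  calc r b c * (1 - r a c) ≤ 1 - r a c :=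
        mul_le_of_le_one_left (sub_nonneg.2 (r_le_one hc a)) (r_le_one hc b)
    _ ≤ 1 - r 0 c := by linarith [r_zero_le hc ha]

/-- With `v = V_β/V_δ`, as `v → ∞` (i.e. `ρ = V_δ/V_β → 0`),
`sup_{b ≥ 0} r(b;c)·(1 − r(b/√(v−1); c)) → 1 − r(0; c)`. -/
theorem stmt13 (c : ℝ) (hc : 0 < c) :
    Filter.Tendsto
      (fun v : ℝ =>
        sSup {y : ℝ | ∃ b : ℝ, 0 ≤ b ∧
          y = r b c * (1 - r (b / Real.sqrt (v - 1)) c)})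
      Filter.atTop (nhds (1 - r 0 c)) := by
  set S : ℝ → Set ℝ := fun v => {y : ℝ | ∃ b : ℝ, 0 ≤ b ∧
    y = r b c * (1 - r (b / Real.sqrt (v - 1)) c)}
  have hle : ∀ v, ∀ y ∈ S v, y ≤ 1 - r 0 c := by
    rintro v _ ⟨b, hb, rfl⟩
    exact r_mul_one_sub_r_le hc.le (by positivity) b
  have hw : Tendsto (fun v : ℝ => √(v - 1)) atTop atTop :=
    Real.tendsto_sqrt_atTop.comp (tendsto_atTop_add_const_right _ _ tendsto_id)
  have hb : Tendsto (fun v : ℝ => √√(v - 1)) atTop atTop := Real.tendsto_sqrt_atTop.comp hw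
  have hratio : Tendsto (fun v : ℝ => √√(v - 1) / √(v - 1)) atTop (𝓝 0) := by
    simpa only [Real.sqrt_div_self, Function.comp_def] using tendsto_inv_atTop_zero.comp hb
  have hlim : Tendsto (fun v : ℝ => r √√(v - 1) c * (1 - r (√√(v - 1) / √(v - 1)) c)) atTop
      (𝓝 (1 - r 0 c)) := by
    simpa using ((tendsto_r_atTop c).comp hb).mul
      (tendsto_const_nhds.sub (((continuous_r c).tendsto 0).comp hratio))
  refine tendsto_of_tendsto_of_tendsto_of_le_of_le hlim tendsto_const_nhds (fun v => ?_)
    fun v => csSup_le ⟨_, 0, le_rfl, rfl⟩ (hle v)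
  exact le_csSup ⟨_, hle v⟩ ⟨_, Real.sqrt_nonneg _, rfl⟩
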